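/- Let F = ZMod 31, A = F[X,Y], D the unique F-linear derivation of A with D(X) = X^31 and D(Y) = Y^31, and S = Algebra.adjoin F {X*Y, X^5 + Y^5}. Let C = F[Z₂, Z₁₂, Z₂₀, Z₃₀] be a polynomial ring in four variables and χ : C → A an F-algebra homomorphism such that χ(Z₂) = X*Y and χ(Z₁₂), χ(Z₂₀), χ(Z₃₀) ∈ S are homogeneous of total degrees 12, 20, 30 respectively. Then for every g ∈ C with χ(g) = D(X*Y), either the coefficient of the monomial Z₂·Z₃₀ in g is nonzero or the coefficient of the monomial Z₁₂·Z₂₀ in g is nonzero. -/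

import Mathlib

/-!
Compare the coefficients of `X^31 Y` on both sides of `χ g = D (X Y) = X^31 Y + X Y^31`.
Since `χ (Z_i)` is homogeneous of degree `2, 12, 20, 30`, a monomial of `g` can only contribute
to that coefficient if its weighted degree is `32`; if moreover it contains `Z₂²`, its image is
divisible by `Y²` and contributes nothing. The only weight-`32` monomials with `Z₂`-exponent at
most one are `Z₂ Z₃₀` and `Z₁₂ Z₂₀`, so if both their coefficients vanished, the coefficient of
`X^31 Y` in `χ g` would be `0`, not `1`.
-/

open MvPolynomial

namespace MvPolynomial

variable {R σ τ : Type*} [CommSemiring R]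

theorem isHomogeneous_algHom_monomial {χ : MvPolynomial σ R →ₐ[R] MvPolynomial τ R}
    {w : σ → ℕ} (hχ : ∀ i, (χ (X i)).IsHomogeneous (w i)) (m : σ →₀ ℕ) (a : R) :
    (χ (monomial m a)).IsHomogeneous (Finsupp.weight w m) := by
  rw [monomial_eq, map_mul, map_finsuppProd, ← algebraMap_eq, AlgHom.commutes, algebraMap_eq,
    Finsupp.weight_apply, Finsupp.prod, Finsupp.sum]
  simp only [map_pow, smul_eq_mul]
  exact (IsHomogeneous.prod _ _ _ fun i _ => mul_comm (w i) (m i) ▸ (hχ i).pow (m i)).C_mul _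

theorem X_pow_dvd_monomial (m : σ →₀ ℕ) (i : σ) (a : R) : X i ^ m i ∣ monomial m a := by
  rw [X_pow_eq_monomial, monomial_dvd_monomial]
  exact ⟨Or.inr (Finsupp.single_le_iff.mpr le_rfl), one_dvd a⟩

theorem coeff_eq_zero_of_X_pow_dvd {p : MvPolynomial σ R} {i : σ} {k : ℕ} (h : X i ^ k ∣ p)
    {μ : σ →₀ ℕ} (hμ : μ i < k) : coeff μ p = 0 := by
  classical
  obtain ⟨q, rfl⟩ := h
  rw [X_pow_eq_monomial, coeff_monomial_mul', if_neg (by rw [Finsupp.single_le_iff]; omega)]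

theorem coeff_derivation_X_mul_X
    (D : Derivation R (MvPolynomial (Fin 2) R) (MvPolynomial (Fin 2) R)) {n : ℕ} (hn : n ≠ 1)
    (hD0 : D (X 0) = X 0 ^ n) (hD1 : D (X 1) = X 1 ^ n) :
    coeff (Finsupp.single 0 n + Finsupp.single 1 1) (D (X 0 * X 1)) = 1 := by
  classical
  rw [D.leibniz, hD0, hD1, smul_eq_mul, smul_eq_mul, coeff_add, X_pow_eq_monomial,
    X_pow_eq_monomial, X, X, monomial_mul, monomial_mul, coeff_monomial, coeff_monomial,
    if_neg, if_pos (add_comm _ _), zero_add, mul_one]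
  exact fun h => hn (by simpa using (DFunLike.congr_fun h 0).symm)

end MvPolynomial

section Coxeter

open Finsupp

variable {R : Type*} [CommSemiring R]

theorem eq_of_weight_eq_32_of_lt_two {m : Fin 4 →₀ ℕ} (hm : weight ![2, 12, 20, 30] m = 32)
    (h0 : m 0 < 2) : m = single 0 1 + single 3 1 ∨ m = single 1 1 + single 2 1 := by
  rw [weight_apply, sum_fintype _ _ (by simp), Fin.sum_univ_four] at hm
  simp only [smul_eq_mul, Matrix.cons_val] at hm
  have hm3 : m 3 ≤ 1 := by omega
  have key : (m 0 = 1 ∧ m 1 = 0 ∧ m 2 = 0 ∧ m 3 = 1) ∨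
      (m 0 = 0 ∧ m 1 = 1 ∧ m 2 = 1 ∧ m 3 = 0) := by
    interval_cases m 0 <;> interval_cases m 3 <;> omega
  rcases key with h | h
  · left; ext i; fin_cases i <;> simp [h]
  · right; ext i; fin_cases i <;> simp [h]

theorem coeff_algHom_monomial_eq_zero (χ : MvPolynomial (Fin 4) R →ₐ[R] MvPolynomial (Fin 2) R)
    (h2 : χ (X 0) = X 0 * X 1) (hχ : ∀ i, (χ (X i)).IsHomogeneous (![2, 12, 20, 30] i))
    {m : Fin 4 →₀ ℕ} (h03 : m ≠ single 0 1 + single 3 1) (h12 : m ≠ single 1 1 + single 2 1)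
    (a : R) : coeff (single 0 31 + single 1 1) (χ (monomial m a)) = 0 := by
  by_cases hw : weight ![2, 12, 20, 30] m = 32
  · have h0 : 2 ≤ m 0 := by
      by_contra! h0
      rcases eq_of_weight_eq_32_of_lt_two hw h0 with h | h <;> contradiction
    refine coeff_eq_zero_of_X_pow_dvd (i := 1) (k := 2) ?_ (by simp)
    calc X 1 ^ 2 ∣ (X 0 * X 1) ^ m 0 :=
          (pow_dvd_pow_of_dvd (dvd_mul_left _ _) 2).trans (pow_dvd_pow _ h0)
      _ = χ (X 0 ^ m 0) := by rw [map_pow, h2]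
      _ ∣ χ (monomial m a) := map_dvd χ (X_pow_dvd_monomial m 0 a)
  · refine (isHomogeneous_algHom_monomial hχ m a).coeff_eq_zero ?_
    rw [map_add, degree_single, degree_single]
    exact fun h => hw h.symm

theorem coeff_algHom_eq_zero (χ : MvPolynomial (Fin 4) R →ₐ[R] MvPolynomial (Fin 2) R)
    (h2 : χ (X 0) = X 0 * X 1) (hχ : ∀ i, (χ (X i)).IsHomogeneous (![2, 12, 20, 30] i))
    {g : MvPolynomial (Fin 4) R} (h03 : coeff (single 0 1 + single 3 1) g = 0)
    (h12 : coeff (single 1 1 + single 2 1) g = 0) :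
    coeff (single 0 31 + single 1 1) (χ g) = 0 := by
  rw [g.as_sum, map_sum, coeff_sum]
  refine Finset.sum_eq_zero fun m _ => ?_
  by_cases hm : m = single 0 1 + single 3 1 ∨ m = single 1 1 + single 2 1
  · obtain rfl | rfl := hm <;> simp [h03, h12]
  · push Not at hm
    exact coeff_algHom_monomial_eq_zero χ h2 hχ hm.1 hm.2 _

end Coxeter

theorem stmt8
    (D : Derivation (ZMod 31) (MvPolynomial (Fin 2) (ZMod 31)) (MvPolynomial (Fin 2) (ZMod 31)))
    (hDX : D (X 0) = X 0 ^ 31) (hDY : D (X 1) = X 1 ^ 31)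
    (χ : MvPolynomial (Fin 4) (ZMod 31) →ₐ[ZMod 31] MvPolynomial (Fin 2) (ZMod 31))
    (h2 : χ (X 0) = X 0 * X 1)
    (h12 : χ (X 1) ∈ Algebra.adjoin (ZMod 31) {X 0 * X 1, X 0 ^ 5 + X 1 ^ 5} ∧
      (χ (X 1)).IsHomogeneous 12)
    (h20 : χ (X 2) ∈ Algebra.adjoin (ZMod 31) {X 0 * X 1, X 0 ^ 5 + X 1 ^ 5} ∧
      (χ (X 2)).IsHomogeneous 20)
    (h30 : χ (X 3) ∈ Algebra.adjoin (ZMod 31) {X 0 * X 1, X 0 ^ 5 + X 1 ^ 5} ∧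
      (χ (X 3)).IsHomogeneous 30)
    (g : MvPolynomial (Fin 4) (ZMod 31)) (hg : χ g = D (X 0 * X 1)) :
    coeff (Finsupp.single (0 : Fin 4) 1 + Finsupp.single 3 1) g ≠ 0 ∨
      coeff (Finsupp.single (1 : Fin 4) 1 + Finsupp.single 2 1) g ≠ 0 := by
  have hχ : ∀ i, (χ (X i)).IsHomogeneous (![2, 12, 20, 30] i) := by
    intro i
    fin_cases i
    · simpa [h2] using (isHomogeneous_X _ 0).mul (isHomogeneous_X _ 1)
    exacts [h12.2, h20.2, h30.2]
  by_contra! h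
  have h31 := coeff_algHom_eq_zero χ h2 hχ h.1 h.2
  rw [hg, coeff_derivation_X_mul_X D (by norm_num) hDX hDY] at h31
  exact absurd h31 (by decide)
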